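/- For every integer n ≥ 1, L_{n,2} = C(3(n-1)n/2, 2) - 3(n-1)^2 = (3/8)(n-1)(n-2)(3n^2+3n-4). -/

import Mathlib

open Finset

/-- The three edges of the upward unit triangle with lower-left corner `p`. -/
def upTri (p : ℕ × ℕ) : Finset (Sym2 (ℕ × ℕ)) :=
  {s(p, (p.1 + 1, p.2)), s(p, (p.1, p.2 + 1)), s((p.1 + 1, p.2), (p.1, p.2 + 1))}

/-- The three edges of the downward unit triangle associated to `p`. -/
def downTri (p : ℕ × ℕ) : Finset (Sym2 (ℕ × ℕ)) :=
  {s((p.1 + 1, p.2), (p.1, p.2 + 1)), s((p.1 + 1, p.2), (p.1 + 1, p.2 + 1)),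
    s((p.1, p.2 + 1), (p.1 + 1, p.2 + 1))}

/-- The upward-pointing unit triangles of the triangular grid of side `n`. -/
def upTris (n : ℕ) : Finset (Finset (Sym2 (ℕ × ℕ))) :=
  ((Finset.range n ×ˢ Finset.range n).filter (fun p => p.1 + p.2 + 1 ≤ n)).image upTri

/-- The downward-pointing unit triangles of the triangular grid of side `n`. -/
def downTris (n : ℕ) : Finset (Finset (Sym2 (ℕ × ℕ))) :=
  ((Finset.range n ×ˢ Finset.range n).filter (fun p => p.1 + p.2 + 2 ≤ n)).image downTri

/-- All unit triangles (each given as its set of three edges). -/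
def unitTris (n : ℕ) : Finset (Finset (Sym2 (ℕ × ℕ))) := upTris n ∪ downTris n

/-- All edges of the triangular grid of side `n`. -/
def allEdges (n : ℕ) : Finset (Sym2 (ℕ × ℕ)) := (unitTris n).sup id

/-- The internal edges: edges belonging to two unit triangles. -/
def internalEdges (n : ℕ) : Finset (Sym2 (ℕ × ℕ)) :=
  (allEdges n).filter (fun e => 2 ≤ ((unitTris n).filter (fun t => e ∈ t)).card)

/-- A lozenge tiling: a set of internal edges, no two in a common unit triangle. -/
def IsLozengeTiling (n : ℕ) (S : Finset (Sym2 (ℕ × ℕ))) : Prop :=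
  S ⊆ internalEdges n ∧ ∀ t ∈ unitTris n, (t ∩ S).card ≤ 1

/-- `L n l`: the number of lozenge tilings of the side-`n` triangle with `l` lozenges. -/
def L (n l : ℕ) : ℕ :=
  (((internalEdges n).powersetCard l).filter
    (fun S => ∀ t ∈ unitTris n, (t ∩ S).card ≤ 1)).card

/-!
Two distinct unit triangles share at most one edge, so a pair of internal edges lying in a
common unit triangle lies in exactly one, and there are `∑ₜ C(#(t ∩ I), 2)` such pairs, `I` being
the set of internal edges. The internal edges are exactly the edges of the `n(n-1)/2` downward
triangles, which are pairwise edge-disjoint: this gives `#I = 3n(n-1)/2` and three pairs in each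
downward triangle. An upward triangle at `p` contributes one pair for each of the three ways two
of its three barycentric coordinates `p.1`, `p.2`, `n - 1 - p.1 - p.2` can be positive, and each
way is realised by `(n-2)(n-1)/2` triangles. Altogether there are `3(n-1)²` such pairs.
-/

theorem card_filter_powersetCard_two_add_sum_choose_two {α : Type*} [DecidableEq α]
    (T : Finset (Finset α)) (I : Finset α)
    (hT : (T : Set (Finset α)).Pairwise fun t t' => #(t ∩ t') ≤ 1) :
    #((I.powersetCard 2).filter fun S => ∀ t ∈ T, #(t ∩ S) ≤ 1) +
      ∑ t ∈ T, (#(t ∩ I)).choose 2 = (#I).choose 2 := by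
  have hbad : (I.powersetCard 2).filter (fun S => ¬ ∀ t ∈ T, #(t ∩ S) ≤ 1) =
      T.biUnion fun t => (t ∩ I).powersetCard 2 := by
    ext S
    simp only [mem_filter, mem_powersetCard, mem_biUnion, subset_inter_iff, not_forall,
      not_le, exists_prop]
    constructor
    · rintro ⟨⟨hSI, hS⟩, t, ht, hlt⟩
      have htS : t ∩ S = S := eq_of_subset_of_card_le inter_subset_right (by omega)
      exact ⟨t, ht, ⟨htS ▸ inter_subset_left, hSI⟩, hS⟩
    · rintro ⟨t, ht, ⟨hSt, hSI⟩, hS⟩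
      exact ⟨⟨hSI, hS⟩, t, ht, by rw [inter_eq_right.mpr hSt, hS]; omega⟩
  have hdisj : (T : Set (Finset α)).PairwiseDisjoint fun t => (t ∩ I).powersetCard 2 := by
    intro t ht t' ht' hne
    simp only [Function.onFun, disjoint_left, mem_powersetCard, subset_inter_iff]
    rintro S ⟨⟨hSt, -⟩, hS⟩ ⟨⟨hSt', -⟩, -⟩
    have := card_le_card (subset_inter hSt hSt')
    have := hT ht ht' hne
    omega
  rw [← card_powersetCard 2 I, ← card_filter_add_card_filter_not
    (s := I.powersetCard 2) (fun S => ∀ t ∈ T, #(t ∩ S) ≤ 1), hbad, card_biUnion hdisj]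
  simp only [card_powersetCard]

def latticeTriangle (m : ℕ) : Finset (ℕ × ℕ) :=
  (range m ×ˢ range m).filter fun p => p.1 + p.2 < m

@[simp] lemma mem_latticeTriangle {m : ℕ} {p : ℕ × ℕ} :
    p ∈ latticeTriangle m ↔ p.1 + p.2 < m := by
  simp only [latticeTriangle, mem_filter, mem_product, mem_range]
  omega

lemma card_latticeTriangle_succ (m : ℕ) :
    #(latticeTriangle (m + 1)) = #(latticeTriangle m) + (m + 1) := by
  have hsplit : latticeTriangle (m + 1) = latticeTriangle m ∪ antidiagonal m := by
    ext p
    simp only [mem_union, mem_latticeTriangle, HasAntidiagonal.mem_antidiagonal]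
    omega
  have hdisj : Disjoint (latticeTriangle m) (antidiagonal m) := by
    simp only [disjoint_left, mem_latticeTriangle, HasAntidiagonal.mem_antidiagonal]
    omega
  rw [hsplit, card_union_of_disjoint hdisj, Nat.card_antidiagonal]

lemma card_latticeTriangle_mul_two (m : ℕ) : #(latticeTriangle m) * 2 = m * (m + 1) := by
  induction m with
  | zero => rfl
  | succ m ih => rw [card_latticeTriangle_succ]; linarith

lemma card_latticeTriangle_add_card_latticeTriangle_succ (m : ℕ) :
    #(latticeTriangle m) + #(latticeTriangle (m + 1)) = (m + 1) ^ 2 := by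
  induction m with
  | zero => rfl
  | succ m ih =>
    rw [card_latticeTriangle_succ (m + 1), card_latticeTriangle_succ m] at *
    linarith

lemma card_filter_latticeTriangle (m a b c : ℕ) :
    #((latticeTriangle m).filter fun p => a ≤ p.1 ∧ b ≤ p.2 ∧ p.1 + p.2 + c < m) =
      #(latticeTriangle (m - (a + b + c))) := by
  have : (latticeTriangle m).filter (fun p => a ≤ p.1 ∧ b ≤ p.2 ∧ p.1 + p.2 + c < m) =
      (latticeTriangle (m - (a + b + c))).map (addLeftEmbedding (a, b)) := by
    ext p
    simp only [mem_filter, mem_latticeTriangle, mem_map, addLeftEmbedding_apply, Prod.exists,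
      Prod.ext_iff, Prod.mk_add_mk]
    constructor
    · rintro ⟨-, ha, hb, hc⟩
      exact ⟨p.1 - a, p.2 - b, by omega, by omega, by omega⟩
    · rintro ⟨x, y, h, hx, hy⟩
      omega
  rw [this, card_map]

def edgeH (p : ℕ × ℕ) : Sym2 (ℕ × ℕ) := s(p, (p.1 + 1, p.2))

def edgeV (p : ℕ × ℕ) : Sym2 (ℕ × ℕ) := s(p, (p.1, p.2 + 1))

def edgeD (p : ℕ × ℕ) : Sym2 (ℕ × ℕ) := s((p.1 + 1, p.2), (p.1, p.2 + 1))

section Edges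

variable {p q : ℕ × ℕ} {e : Sym2 (ℕ × ℕ)}

@[simp] lemma edgeH_inj : edgeH p = edgeH q ↔ p = q := by
  simp only [edgeH, Sym2.eq_iff, Prod.ext_iff]; omega

@[simp] lemma edgeV_inj : edgeV p = edgeV q ↔ p = q := by
  simp only [edgeV, Sym2.eq_iff, Prod.ext_iff]; omega

@[simp] lemma edgeD_inj : edgeD p = edgeD q ↔ p = q := by
  simp only [edgeD, Sym2.eq_iff, Prod.ext_iff]; omega

@[simp] lemma edgeH_ne_edgeV : edgeH p ≠ edgeV q := by
  simp only [edgeH, edgeV, ne_eq, Sym2.eq_iff, Prod.ext_iff]; omega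

@[simp] lemma edgeH_ne_edgeD : edgeH p ≠ edgeD q := by
  simp only [edgeH, edgeD, ne_eq, Sym2.eq_iff, Prod.ext_iff]; omega

@[simp] lemma edgeV_ne_edgeD : edgeV p ≠ edgeD q := by
  simp only [edgeV, edgeD, ne_eq, Sym2.eq_iff, Prod.ext_iff]; omega

@[simp] lemma edgeV_ne_edgeH : edgeV p ≠ edgeH q := edgeH_ne_edgeV.symm

@[simp] lemma edgeD_ne_edgeH : edgeD p ≠ edgeH q := edgeH_ne_edgeD.symm

@[simp] lemma edgeD_ne_edgeV : edgeD p ≠ edgeV q := edgeV_ne_edgeD.symm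

lemma upTri_eq (p : ℕ × ℕ) : upTri p = {edgeH p, edgeV p, edgeD p} := rfl

lemma downTri_eq (p : ℕ × ℕ) :
    downTri p = {edgeD p, edgeV (p.1 + 1, p.2), edgeH (p.1, p.2 + 1)} := rfl

lemma mem_upTri : e ∈ upTri p ↔ e = edgeH p ∨ e = edgeV p ∨ e = edgeD p := by
  simp only [upTri_eq, mem_insert, mem_singleton]

lemma mem_downTri :
    e ∈ downTri p ↔ e = edgeD p ∨ e = edgeV (p.1 + 1, p.2) ∨ e = edgeH (p.1, p.2 + 1) := by
  simp only [downTri_eq, mem_insert, mem_singleton]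

@[simp] lemma card_upTri : #(upTri p) = 3 := by
  rw [upTri_eq, card_insert_of_notMem (by simp), card_pair edgeV_ne_edgeD]

@[simp] lemma card_downTri : #(downTri p) = 3 := by
  rw [downTri_eq, card_insert_of_notMem (by simp), card_pair edgeV_ne_edgeH]

@[simp] lemma edgeH_mem_upTri : edgeH p ∈ upTri q ↔ p = q := by simp [mem_upTri, eq_comm]

@[simp] lemma edgeV_mem_upTri : edgeV p ∈ upTri q ↔ p = q := by simp [mem_upTri, eq_comm]

@[simp] lemma edgeD_mem_upTri : edgeD p ∈ upTri q ↔ p = q := by simp [mem_upTri]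

@[simp] lemma edgeH_mem_downTri : edgeH p ∈ downTri q ↔ p = (q.1, q.2 + 1) := by
  simp [mem_downTri]

@[simp] lemma edgeV_mem_downTri : edgeV p ∈ downTri q ↔ p = (q.1 + 1, q.2) := by
  simp [mem_downTri]

@[simp] lemma edgeD_mem_downTri : edgeD p ∈ downTri q ↔ p = q := by simp [mem_downTri]

lemma eq_of_mem_upTri_of_mem_upTri (hp : e ∈ upTri p) (hq : e ∈ upTri q) : p = q := by
  rcases mem_upTri.1 hp with rfl | rfl | rfl <;> simpa using hq

lemma eq_of_mem_downTri_of_mem_downTri (hp : e ∈ downTri p) (hq : e ∈ downTri q) :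
    p = q := by
  rcases mem_downTri.1 hp with rfl | rfl | rfl <;> simpa [Prod.ext_iff, eq_comm] using hq

lemma card_upTri_inter_downTri_le_one (p q : ℕ × ℕ) : #(upTri p ∩ downTri q) ≤ 1 := by
  refine card_le_one.2 fun a ha b hb => ?_
  rw [mem_inter] at ha hb
  rcases mem_upTri.1 ha.1 with rfl | rfl | rfl <;> rcases mem_upTri.1 hb.1 with rfl | rfl | rfl <;>
    simp_all [Prod.ext_iff]

lemma upTri_ne_downTri (p q : ℕ × ℕ) : upTri p ≠ downTri q := by
  intro h
  have := card_upTri_inter_downTri_le_one p q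
  rw [← h, inter_self, card_upTri] at this
  omega

lemma exists_mem_upTri_of_mem_downTri (h : e ∈ downTri q) :
    ∃ p, p.1 + p.2 ≤ q.1 + q.2 + 1 ∧ e ∈ upTri p := by
  rcases mem_downTri.1 h with rfl | rfl | rfl
  exacts [⟨q, by omega, by simp⟩, ⟨_, by dsimp; omega, edgeV_mem_upTri.2 rfl⟩,
    ⟨_, by dsimp; omega, edgeH_mem_upTri.2 rfl⟩]

end Edges

section Grid

variable {n : ℕ} {e : Sym2 (ℕ × ℕ)}

lemma upTri_injective : Function.Injective upTri := fun _ _ h =>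
  eq_of_mem_upTri_of_mem_upTri (edgeH_mem_upTri.2 rfl) (h ▸ edgeH_mem_upTri.2 rfl)

lemma downTri_injective : Function.Injective downTri := fun _ _ h =>
  eq_of_mem_downTri_of_mem_downTri (edgeD_mem_downTri.2 rfl) (h ▸ edgeD_mem_downTri.2 rfl)

lemma upTris_eq (n : ℕ) : upTris n = (latticeTriangle n).image upTri := rfl

lemma downTris_eq (n : ℕ) : downTris n = (latticeTriangle (n - 1)).image downTri := by
  unfold downTris
  congr 1
  ext p
  simp only [mem_filter, mem_product, mem_range, mem_latticeTriangle]
  omega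

lemma mem_unitTris {t : Finset (Sym2 (ℕ × ℕ))} :
    t ∈ unitTris n ↔
      (∃ p ∈ latticeTriangle n, upTri p = t) ∨ ∃ q ∈ latticeTriangle (n - 1), downTri q = t := by
  rw [unitTris, upTris_eq, downTris_eq, mem_union, mem_image, mem_image]

lemma sum_unitTris {M : Type*} [AddCommMonoid M] (n : ℕ) (f : Finset (Sym2 (ℕ × ℕ)) → M) :
    ∑ t ∈ unitTris n, f t =
      ∑ p ∈ latticeTriangle n, f (upTri p) + ∑ q ∈ latticeTriangle (n - 1), f (downTri q) := by
  rw [unitTris, sum_union, upTris_eq, downTris_eq, sum_image upTri_injective.injOn,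
    sum_image downTri_injective.injOn]
  rw [upTris_eq, downTris_eq, disjoint_left]
  simp only [mem_image, not_exists, not_and]
  rintro _ ⟨p, -, rfl⟩ q - h
  exact upTri_ne_downTri p q h.symm

lemma pairwise_card_inter_unitTris_le_one (n : ℕ) :
    (unitTris n : Set (Finset (Sym2 (ℕ × ℕ)))).Pairwise fun t t' => #(t ∩ t') ≤ 1 := by
  intro t ht t' ht' hne
  rcases mem_unitTris.1 ht with ⟨p, -, rfl⟩ | ⟨p, -, rfl⟩ <;>
    rcases mem_unitTris.1 ht' with ⟨q, -, rfl⟩ | ⟨q, -, rfl⟩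
  · refine card_le_one.2 fun e he _ _ => absurd ?_ hne
    rw [mem_inter] at he
    rw [eq_of_mem_upTri_of_mem_upTri he.1 he.2]
  · exact card_upTri_inter_downTri_le_one p q
  · exact inter_comm (upTri q) _ ▸ card_upTri_inter_downTri_le_one q p
  · refine card_le_one.2 fun e he _ _ => absurd ?_ hne
    rw [mem_inter] at he
    rw [eq_of_mem_downTri_of_mem_downTri he.1 he.2]

/-- Of the two unit triangles through an internal edge, one points downward since two upward
triangles share no edge. -/
lemma mem_internalEdges : e ∈ internalEdges n ↔ ∃ q ∈ latticeTriangle (n - 1), e ∈ downTri q := by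
  rw [internalEdges, mem_filter]
  constructor
  · rintro ⟨-, h⟩
    obtain ⟨t, ht, t', ht', hne⟩ := one_lt_card.1 h
    rw [mem_filter] at ht ht'
    rcases mem_unitTris.1 ht.1 with ⟨p, -, rfl⟩ | ⟨q, hq, rfl⟩
    · rcases mem_unitTris.1 ht'.1 with ⟨p', -, rfl⟩ | ⟨q, hq, rfl⟩
      · exact absurd (congrArg upTri (eq_of_mem_upTri_of_mem_upTri ht.2 ht'.2)) hne
      · exact ⟨q, hq, ht'.2⟩
    · exact ⟨q, hq, ht.2⟩
  · rintro ⟨q, hq, he⟩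
    obtain ⟨p, hp, he'⟩ := exists_mem_upTri_of_mem_downTri he
    have hup : upTri p ∈ unitTris n :=
      mem_unitTris.2 (Or.inl ⟨p, by rw [mem_latticeTriangle] at hq ⊢; omega, rfl⟩)
    have hdown : downTri q ∈ unitTris n := mem_unitTris.2 (Or.inr ⟨q, hq, rfl⟩)
    exact ⟨mem_sup.2 ⟨_, hdown, he⟩, one_lt_card.2
      ⟨_, mem_filter.2 ⟨hup, he'⟩, _, mem_filter.2 ⟨hdown, he⟩, upTri_ne_downTri p q⟩⟩

lemma card_internalEdges_eq (n : ℕ) : #(internalEdges n) = 3 * #(latticeTriangle (n - 1)) := by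
  have : internalEdges n = (latticeTriangle (n - 1)).biUnion downTri := by
    ext e
    rw [mem_internalEdges, mem_biUnion]
  rw [this, card_biUnion, sum_const_nat fun _ _ => card_downTri, mul_comm]
  exact fun p _ q _ hpq => disjoint_left.2 fun e hp hq =>
    hpq (eq_of_mem_downTri_of_mem_downTri hp hq)

end Grid

section Count

variable {n : ℕ} {p q : ℕ × ℕ}

lemma edgeH_mem_internalEdges : edgeH p ∈ internalEdges n ↔ 1 ≤ p.2 ∧ p.1 + p.2 < n := by
  simp only [mem_internalEdges, edgeH_mem_downTri, mem_latticeTriangle, Prod.ext_iff]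
  constructor
  · rintro ⟨q, hq, h1, h2⟩
    omega
  · exact fun h => ⟨(p.1, p.2 - 1), by dsimp; omega, rfl, by dsimp; omega⟩

lemma edgeV_mem_internalEdges : edgeV p ∈ internalEdges n ↔ 1 ≤ p.1 ∧ p.1 + p.2 < n := by
  simp only [mem_internalEdges, edgeV_mem_downTri, mem_latticeTriangle, Prod.ext_iff]
  constructor
  · rintro ⟨q, hq, h1, h2⟩
    omega
  · exact fun h => ⟨(p.1 - 1, p.2), by dsimp; omega, by dsimp; omega, rfl⟩

lemma edgeD_mem_internalEdges : edgeD p ∈ internalEdges n ↔ p.1 + p.2 + 1 < n := by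
  simp only [mem_internalEdges, edgeD_mem_downTri, mem_latticeTriangle]
  constructor
  · rintro ⟨q, hq, rfl⟩
    omega
  · exact fun h => ⟨p, by omega, rfl⟩

lemma card_upTri_inter (p : ℕ × ℕ) (I : Finset (Sym2 (ℕ × ℕ))) :
    #(upTri p ∩ I) = (if edgeH p ∈ I then 1 else 0) + (if edgeV p ∈ I then 1 else 0) +
      (if edgeD p ∈ I then 1 else 0) := by
  rw [← filter_mem_eq_inter, card_filter, upTri_eq, sum_insert (by simp),
    sum_pair edgeV_ne_edgeD, add_assoc]

/-- Each offset `(a, b, c)` stands for one of the three pairs of edges of `upTri p`; both edges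
of that pair are internal iff `a ≤ p.1`, `b ≤ p.2` and `p.1 + p.2 + c < n`. -/
lemma choose_two_card_upTri_inter_internalEdges (hp : p ∈ latticeTriangle n) :
    (#(upTri p ∩ internalEdges n)).choose 2 =
      ∑ x ∈ ({(1, 1, 0), (0, 1, 1), (1, 0, 1)} : Finset (ℕ × ℕ × ℕ)),
        if x.1 ≤ p.1 ∧ x.2.1 ≤ p.2 ∧ p.1 + p.2 + x.2.2 < n then 1 else 0 := by
  rw [mem_latticeTriangle] at hp
  rw [card_upTri_inter, sum_insert (by decide), sum_pair (by decide)]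
  simp only [edgeH_mem_internalEdges, edgeV_mem_internalEdges, edgeD_mem_internalEdges]
  split_ifs <;> first | rfl | omega

lemma card_downTri_inter_internalEdges (hq : q ∈ latticeTriangle (n - 1)) :
    #(downTri q ∩ internalEdges n) = 3 := by
  rw [inter_eq_left.2 fun e he => mem_internalEdges.2 ⟨q, hq, he⟩, card_downTri]

lemma sum_choose_two_card_upTri_inter_internalEdges (n : ℕ) :
    ∑ p ∈ latticeTriangle n, (#(upTri p ∩ internalEdges n)).choose 2 =
      3 * #(latticeTriangle (n - 2)) := by
  rw [sum_congr rfl fun p hp => choose_two_card_upTri_inter_internalEdges hp, sum_comm]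
  simp only [sum_boole, Nat.cast_id, card_filter_latticeTriangle]
  rw [sum_insert (by decide), sum_pair (by decide)]
  norm_num
  ring

lemma sum_choose_two_card_inter_internalEdges (n : ℕ) :
    ∑ t ∈ unitTris n, (#(t ∩ internalEdges n)).choose 2 = 3 * (n - 1) ^ 2 := by
  rw [sum_unitTris, sum_choose_two_card_upTri_inter_internalEdges,
    sum_congr rfl fun q hq => by rw [card_downTri_inter_internalEdges hq], sum_const, smul_eq_mul,
    show (3 : ℕ).choose 2 = 3 from rfl]
  rcases n with _ | _ | n
  · rfl
  · rfl
  · rw [show n + 2 - 2 = n by omega, show n + 2 - 1 = n + 1 by omega,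
      ← card_latticeTriangle_add_card_latticeTriangle_succ n]
    ring

lemma card_internalEdges_mul_two (n : ℕ) : #(internalEdges n) * 2 = 3 * (n - 1) * n := by
  rw [card_internalEdges_eq, mul_assoc, card_latticeTriangle_mul_two, mul_assoc]
  rcases n with _ | n
  · rfl
  · rw [Nat.add_sub_cancel]

lemma L_two_add_three_mul_sq (n : ℕ) :
    L n 2 + 3 * (n - 1) ^ 2 = (#(internalEdges n)).choose 2 := by
  rw [← sum_choose_two_card_inter_internalEdges]
  exact card_filter_powersetCard_two_add_sum_choose_two _ _
    (pairwise_card_inter_unitTris_le_one n)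

end Count

/-- `L_{n,2} = C(3(n-1)n/2, 2) - 3(n-1)² = (3/8)(n-1)(n-2)(3n²+3n-4)` for `n ≥ 1`. -/
theorem L_two (n : ℕ) (hn : 1 ≤ n) :
    (L n 2 : ℚ) = (Nat.choose (3 * (n - 1) * n / 2) 2 : ℚ) - 3 * ((n : ℚ) - 1) ^ 2 ∧
    (L n 2 : ℚ) =
      3 / 8 * ((n : ℚ) - 1) * ((n : ℚ) - 2) * (3 * (n : ℚ) ^ 2 + 3 * n - 4) := by
  have hI := card_internalEdges_mul_two n
  have hL : (L n 2 : ℚ) = ((#(internalEdges n)).choose 2 : ℕ) - 3 * ((n : ℚ) - 1) ^ 2 := by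
    rw [← L_two_add_three_mul_sq n]
    push_cast [Nat.cast_sub hn]
    ring
  refine ⟨by rw [hL, Nat.div_eq_of_eq_mul_left two_pos hI.symm], ?_⟩
  have hIq : (#(internalEdges n) : ℚ) = 3 * ((n : ℚ) - 1) * n / 2 := by
    have hIq2 := congrArg (Nat.cast : ℕ → ℚ) hI
    push_cast [Nat.cast_sub hn] at hIq2
    linarith
  rw [hL, Nat.cast_choose_two, hIq]
  ring
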